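/- Suppose x_1, y_1, x_2, y_2, ..., x_m, y_m are points in a metric space appearing in this order along a non-backtracking sequence (satisfying the reverse triangle inequality with constant B between any three points in order), and for each i, d(x_i, y_i) ≥ (s_i − t_i)/P − P where s_i − t_i ≥ L and L/(2P) ≥ P + 2B. Then d(x_1, y_m) ≥ (1/(2P))·Σ_i (s_i − t_i). -/

import Mathlib

/-!
Telescoping the reverse triangle inequality along `x₀, y₀, x₁, y₁, …` gives
`d(x₀, y_{m-1}) ≥ Σ (d(xᵢ, yᵢ) - 2B)`: each new pair `xᵢ, yᵢ` costs two applications, and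
the gap `d(y_{i-1}, xᵢ)` is simply dropped. Since `sᵢ - tᵢ ≥ L`, the hypothesis
`L/(2P) ≥ P + 2B` absorbs both the additive error `P` and the loss `2B` into half of the
linear lower bound `(sᵢ - tᵢ)/P`.
-/

open Finset

theorem sum_dist_sub_le_dist_of_reverse_triangle {X : Type*} [PseudoMetricSpace X]
    {z : ℕ → X} {B : ℝ} {N : ℕ}
    (hrev : ∀ i j k : ℕ, i ≤ j → j ≤ k → k ≤ N →
      dist (z i) (z j) + dist (z j) (z k) - B ≤ dist (z i) (z k))
    {n : ℕ} (hn : 2 * n + 1 ≤ N) :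
    ∑ i ∈ range (n + 1), (dist (z (2 * i)) (z (2 * i + 1)) - 2 * B)
      ≤ dist (z 0) (z (2 * n + 1)) := by
  induction n with
  | zero =>
    have hB : 0 ≤ B := by simpa using hrev 0 0 0 le_rfl le_rfl (Nat.zero_le N)
    simp only [zero_add, sum_range_one, mul_zero]
    linarith
  | succ n ih =>
    have ih := ih (by omega)
    have hfar := hrev 0 (2 * n + 1) (2 * n + 2 + 1) (by omega) (by omega) (by omega)
    have hnear := hrev (2 * n + 1) (2 * n + 2) (2 * n + 2 + 1) (by omega) (by omega) (by omega)
    have hgap := dist_nonneg (x := z (2 * n + 1)) (y := z (2 * n + 2))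
    rw [sum_range_succ, show 2 * (n + 1) = 2 * n + 2 by ring]
    linarith

theorem div_two_mul_le_div_sub_of_le {a B P L : ℝ} (hP : 0 < P)
    (hLP : P + 2 * B ≤ L / (2 * P)) (hLa : L ≤ a) :
    a / (2 * P) ≤ a / P - P - 2 * B := by
  have hhalf : a / P = a / (2 * P) + a / (2 * P) := by field_simp; ring
  have hLa' : L / (2 * P) ≤ a / (2 * P) := by gcongr
  linarith

theorem long_thick_intervals_progress_general
    {X : Type*} [MetricSpace X] (m : ℕ)
    (B P L : ℝ) (hP : 0 < P)
    (hLP : P + 2 * B ≤ L / (2 * P))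
    (x y : ℕ → X) (z : ℕ → X)
    (hze : ∀ i, z (2 * i) = x i) (hzo : ∀ i, z (2 * i + 1) = y i)
    (hrev : ∀ i j k : ℕ, i ≤ j → j ≤ k → k ≤ 2 * m - 1 →
      dist (z i) (z j) + dist (z j) (z k) - B ≤ dist (z i) (z k))
    (t s : ℕ → ℝ)
    (hts : ∀ i < m, L ≤ s i - t i)
    (hxy : ∀ i < m, (s i - t i) / P - P ≤ dist (x i) (y i)) :
    (1 / (2 * P)) * ∑ i ∈ Finset.range m, (s i - t i)
      ≤ dist (x 0) (y (m - 1)) := by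
  obtain _ | n := m
  · simp
  have hchain := sum_dist_sub_le_dist_of_reverse_triangle hrev (n := n) (by omega)
  have hx0 : z 0 = x 0 := by simpa using hze 0
  simp only [hze, hzo, hx0] at hchain
  calc (1 / (2 * P)) * ∑ i ∈ range (n + 1), (s i - t i)
      = ∑ i ∈ range (n + 1), (s i - t i) / (2 * P) := by
        rw [mul_sum]; exact sum_congr rfl fun _ _ => one_div_mul_eq_div _ _
    _ ≤ ∑ i ∈ range (n + 1), (dist (x i) (y i) - 2 * B) := by
        refine sum_le_sum fun i hi => ?_
        have hi := mem_range.mp hi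
        linarith [div_two_mul_le_div_sub_of_le hP hLP (hts i hi), hxy i hi]
    _ ≤ dist (x 0) (y (n + 1 - 1)) := by simpa using hchain

/-- Lemma 4.5 (long thick intervals give progress): if the points
`x 0, y 0, x 1, y 1, …, x (m-1), y (m-1)` appear in order along a non-backtracking
sequence (reverse triangle inequality with constant `B`), each `dist (x i) (y i)` is at
least `(s i - t i)/P - P` with `s i - t i ≥ L` and `L/(2P) ≥ P + 2B`, then
`dist (x 0) (y (m-1)) ≥ (1/(2P)) * Σ (s i - t i)`. -/
theorem long_thick_intervals_progress
    {X : Type*} [MetricSpace X] (m : ℕ) (hm : 1 ≤ m)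
    (B P L : ℝ) (hB : 0 < B) (hP : 0 < P) (hL : 0 < L)
    (hLP : P + 2 * B ≤ L / (2 * P))
    (x y : ℕ → X) (z : ℕ → X)
    (hze : ∀ i, z (2 * i) = x i) (hzo : ∀ i, z (2 * i + 1) = y i)
    (hrev : ∀ i j k : ℕ, i ≤ j → j ≤ k → k ≤ 2 * m - 1 →
      dist (z i) (z j) + dist (z j) (z k) - B ≤ dist (z i) (z k))
    (t s : ℕ → ℝ)
    (hts : ∀ i < m, L ≤ s i - t i)
    (hxy : ∀ i < m, (s i - t i) / P - P ≤ dist (x i) (y i)) :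
    (1 / (2 * P)) * ∑ i ∈ Finset.range m, (s i - t i)
      ≤ dist (x 0) (y (m - 1)) :=
  long_thick_intervals_progress_general m B P L hP hLP x y z hze hzo hrev t s hts hxy
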